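/- arXiv:math/0402043 — 3 statements merged into one kernel-verified Lean document; each statement's English description precedes it below -/
import Mathlib

section
/- Let F : 𝒜 → ℬ be an exact functor (commuting with the shift and sending distinguished triangles to distinguished triangles) between pretriangulated categories, and suppose F admits both a left adjoint and a right adjoint. Then F is fully faithful if and only if there exists a spanning class Ω for 𝒜 such that for all objects a₁, a₂ in Ω and all integers i, the map induced by F from Hom_𝒜(a₁, a₂⟦i⟧) to Hom_ℬ(F a₁, F a₂⟦i⟧) is a bijection. -/
open CategoryTheory Limits

universe v₁ v₂ u₁ u₂

/-- A set `Ω` of objects of a category with shift is a *spanning class* if any object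
left- or right-orthogonal to all shifts of objects of `Ω` is zero. -/
def SpanningClass {C : Type u₁} [Category.{v₁} C] [Preadditive C] [HasShift C ℤ]
    (Ω : Set C) : Prop :=
  ∀ a : C,
    ((∀ b ∈ Ω, ∀ i : ℤ, ∀ f : a ⟶ b⟦i⟧, f = 0) → IsZero a) ∧
    ((∀ b ∈ Ω, ∀ i : ℤ, ∀ f : b ⟶ a⟦i⟧, f = 0) → IsZero a)

/-!
Let `S` be the closure of `Ω` under shifts and isomorphisms; `F` acts bijectively on `Hom(X, Y)`
for `X, Y ∈ S`. In a pretriangulated category, a morphism `f` is invertible as soon as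
`Hom(W, f)` (or `Hom(f, W)`) is bijective for every `W ∈ S`: the long exact `Hom`-sequence then
kills all maps between `S` and the cone of `f`, and the cone vanishes because `Ω` is spanning.
For `F ⊣ R`, `Hom(W, η_Y)` is `F` acting on `Hom(W, Y)`, so the unit `η_Y` is invertible for
`Y ∈ S`, and hence `F` is bijective on `Hom(X, Y)` for all `X` and all `Y ∈ S`. For `L ⊣ F`,
`Hom(ε_X, Y)` is again `F` acting on `Hom(X, Y)`, so every counit `ε_X` is invertible, and `F` is
fully faithful.
-/

namespace CategoryTheory

open Pretriangulated

section Shift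

variable {C : Type u₁} [Category.{v₁} C] [HasShift C ℤ]

lemma postcomp_shift_map_injective {X Y : C} (f : X ⟶ Y) (W : C) (n : ℤ)
    (h : Function.Injective (fun φ : W⟦-n⟧ ⟶ X => φ ≫ f)) :
    Function.Injective (fun ψ : W ⟶ X⟦n⟧ => ψ ≫ f⟦n⟧') := by
  let adj := (shiftEquiv C n).symm.toAdjunction
  let eX : (W⟦-n⟧ ⟶ X) ≃ (W ⟶ X⟦n⟧) := adj.homEquiv W X
  let eY : (W⟦-n⟧ ⟶ Y) ≃ (W ⟶ Y⟦n⟧) := adj.homEquiv W Y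
  have hconj : (fun ψ : W ⟶ X⟦n⟧ => ψ ≫ f⟦n⟧') = eY ∘ (fun φ => φ ≫ f) ∘ eX.symm := by
    have key : ∀ φ, eY (φ ≫ f) = eX φ ≫ f⟦n⟧' := fun φ => adj.homEquiv_naturality_right φ f
    ext ψ
    simp only [Function.comp_apply, key, Equiv.apply_symm_apply]
  rw [hconj]
  exact eY.injective.comp (h.comp eX.symm.injective)

lemma shift_map_precomp_surjective {X Y : C} (f : X ⟶ Y) (W : C) (n : ℤ)
    (h : Function.Surjective (fun φ : Y ⟶ W⟦-n⟧ => f ≫ φ)) :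
    Function.Surjective (fun ψ : Y⟦n⟧ ⟶ W => f⟦n⟧' ≫ ψ) := by
  let adj := (shiftEquiv C n).toAdjunction
  let eX : (X⟦n⟧ ⟶ W) ≃ (X ⟶ W⟦-n⟧) := adj.homEquiv X W
  let eY : (Y⟦n⟧ ⟶ W) ≃ (Y ⟶ W⟦-n⟧) := adj.homEquiv Y W
  have hconj : (fun ψ : Y⟦n⟧ ⟶ W => f⟦n⟧' ≫ ψ) = eX.symm ∘ (fun φ => f ≫ φ) ∘ eY := by
    have key : ∀ φ, eX.symm (f ≫ φ) = f⟦n⟧' ≫ eY.symm φ :=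
      fun φ => adj.homEquiv_naturality_left_symm f φ
    ext ψ
    simp only [Function.comp_apply, key, Equiv.symm_apply_apply]
  rw [hconj]
  exact eX.symm.surjective.comp (h.comp eY.surjective)

end Shift

section Pretriangulated

variable {C : Type u₁} [Category.{v₁} C] [Preadditive C] [HasZeroObject C] [HasShift C ℤ]
  [∀ n : ℤ, (shiftFunctor C n).Additive] [Pretriangulated C]

variable {P : ObjectProperty C} [P.IsStableUnderShift ℤ]

lemma Pretriangulated.rightOrthogonal_obj₃_of_bijective_postcomp_mor₁
    (T : Triangle C) (hT : T ∈ distTriang C)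
    (h : ∀ ⦃W⦄, P W → Function.Bijective (fun φ : W ⟶ T.obj₁ => φ ≫ T.mor₁)) :
    P.rightOrthogonal T.obj₃ := by
  intro W f hW
  have hf : f ≫ T.mor₃ = 0 := by
    apply postcomp_shift_map_injective T.mor₁ W 1 (h (P.le_shift (-1) W hW)).1
    simp [comp_distTriang_mor_zero₃₁ T hT]
  obtain ⟨g, rfl⟩ := T.coyoneda_exact₃ hT f hf
  obtain ⟨φ, rfl⟩ := (h hW).2 g
  simp [comp_distTriang_mor_zero₁₂ T hT]

lemma Pretriangulated.leftOrthogonal_obj₃_of_bijective_precomp_mor₁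
    (T : Triangle C) (hT : T ∈ distTriang C)
    (h : ∀ ⦃W⦄, P W → Function.Bijective (fun φ : T.obj₂ ⟶ W => T.mor₁ ≫ φ)) :
    P.leftOrthogonal T.obj₃ := by
  intro W f hW
  have hf : T.mor₂ ≫ f = 0 := by
    apply (h hW).1
    simp [reassoc_of% comp_distTriang_mor_zero₁₂ T hT]
  obtain ⟨g, rfl⟩ := T.yoneda_exact₃ hT f hf
  obtain ⟨φ, rfl⟩ := shift_map_precomp_surjective T.mor₁ W 1 (h (P.le_shift (-1) W hW)).2 g
  simp [reassoc_of% comp_distTriang_mor_zero₃₁ T hT]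

end Pretriangulated

namespace Functor

variable {A : Type u₁} {B : Type u₂} [Category.{v₁} A] [Category.{v₂} B] (F : A ⥤ B)

lemma map_bijective_of_iso {X Y X' Y' : A} (e₁ : X ≅ X') (e₂ : Y ≅ Y')
    (h : Function.Bijective (F.map : (X ⟶ Y) → _)) :
    Function.Bijective (F.map : (X' ⟶ Y') → _) := by
  rw [← Function.Bijective.of_comp_iff _ (e₁.homCongr e₂).bijective]
  convert ((F.mapIso e₁).homCongr (F.mapIso e₂)).bijective.comp h using 1
  ext f
  exact F.map_homCongr e₁ e₂ f

lemma map_bijective_shift [HasShift A ℤ] [HasShift B ℤ] [F.CommShift ℤ] {X Y : A} (n : ℤ)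
    (h : Function.Bijective (F.map : (X ⟶ Y) → _)) :
    Function.Bijective (F.map : (X⟦n⟧ ⟶ Y⟦n⟧) → _) := by
  let e := ((F.commShiftIso n).app X).symm.homCongr ((F.commShiftIso n).app Y).symm
  have hcomm : F.map ∘ (shiftFunctor A n).map = e ∘ (shiftFunctor B n).map ∘ F.map := by
    ext f
    simp [e]
  rw [← Function.Bijective.of_comp_iff _
    ((FullyFaithful.ofFullyFaithful (shiftFunctor A n)).map_bijective X Y), hcomm]
  exact e.bijective.comp
    (((FullyFaithful.ofFullyFaithful (shiftFunctor B n)).map_bijective _ _).comp h)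

lemma map_bijective_of_mem_shiftClosure [HasShift A ℤ] [HasShift B ℤ] [F.CommShift ℤ]
    {Ω : Set A} (h : ∀ a₁ ∈ Ω, ∀ a₂ ∈ Ω, ∀ i : ℤ, Function.Bijective (F.map : (a₁ ⟶ a₂⟦i⟧) → _))
    ⦃X Y : A⦄ (hX : ObjectProperty.shiftClosure (· ∈ Ω) ℤ X)
    (hY : ObjectProperty.shiftClosure (· ∈ Ω) ℤ Y) :
    Function.Bijective (F.map : (X ⟶ Y) → _) := by
  obtain ⟨a₁, i, e₁, h₁⟩ := hX
  obtain ⟨a₂, j, e₂, h₂⟩ := hY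
  exact F.map_bijective_of_iso e₁.symm
    ((shiftFunctorAdd' A (j - i) i j (by omega)).symm.app a₂ ≪≫ e₂.symm)
    (F.map_bijective_shift i (h a₁ h₁ a₂ h₂ (j - i)))

end Functor

namespace Adjunction

variable {A : Type u₁} {B : Type u₂} [Category.{v₁} A] [Category.{v₂} B]

lemma bijective_postcomp_unit_app_iff {F : A ⥤ B} {G : B ⥤ A} (adj : F ⊣ G) (X Y : A) :
    Function.Bijective (fun φ : X ⟶ Y => φ ≫ adj.unit.app Y) ↔
      Function.Bijective (F.map : (X ⟶ Y) → _) := by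
  rw [← Function.Bijective.of_comp_iff' (adj.homEquiv X (F.obj Y)).bijective]
  congr! with φ
  simp [Adjunction.homEquiv_unit]

lemma bijective_precomp_counit_app_iff {F : A ⥤ B} {G : B ⥤ A} (adj : G ⊣ F) (X Y : A) :
    Function.Bijective (fun φ : X ⟶ Y => adj.counit.app X ≫ φ) ↔
      Function.Bijective (F.map : (X ⟶ Y) → _) := by
  rw [← Function.Bijective.of_comp_iff' (adj.homEquiv (F.obj X) Y).bijective]
  congr!
  ext φ
  simp [Adjunction.homEquiv_unit]

end Adjunction

end CategoryTheory

namespace SpanningClass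

open CategoryTheory Pretriangulated ObjectProperty

section

variable {C : Type u₁} [Category.{v₁} C] [Preadditive C] [HasShift C ℤ]

lemma univ : SpanningClass (Set.univ : Set C) := fun a =>
  ⟨fun h => IsZero.of_mono_eq_zero _ (h a trivial 0 ((shiftFunctorZero C ℤ).inv.app a)),
    fun h => IsZero.of_mono_eq_zero _ (h a trivial 0 ((shiftFunctorZero C ℤ).inv.app a))⟩

variable {Ω : Set C}

lemma isZero_of_rightOrthogonal (hΩ : SpanningClass Ω) {X : C}
    (hX : (shiftClosure (· ∈ Ω) ℤ).rightOrthogonal X) : IsZero X :=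
  (hΩ X).2 fun b hb i f => le_shift _ i X hX f (le_shiftClosure _ b hb)

lemma isZero_of_leftOrthogonal (hΩ : SpanningClass Ω) {X : C}
    (hX : (shiftClosure (· ∈ Ω) ℤ).leftOrthogonal X) : IsZero X :=
  (hΩ X).1 fun b hb i f => hX f (le_shift _ i b (le_shiftClosure _ b hb))

end

variable {C : Type u₁} [Category.{v₁} C] [Preadditive C] [HasZeroObject C] [HasShift C ℤ]
  [∀ n : ℤ, (shiftFunctor C n).Additive] [Pretriangulated C] {Ω : Set C}

lemma isIso_of_bijective_postcomp (hΩ : SpanningClass Ω) {X Y : C} (f : X ⟶ Y)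
    (h : ∀ ⦃W⦄, shiftClosure (· ∈ Ω) ℤ W → Function.Bijective (fun φ : W ⟶ X => φ ≫ f)) :
    IsIso f := by
  obtain ⟨Z, g, k, hT⟩ := distinguished_cocone_triangle f
  exact (Triangle.isZero₃_iff_isIso₁ _ hT).1
    (hΩ.isZero_of_rightOrthogonal (rightOrthogonal_obj₃_of_bijective_postcomp_mor₁ _ hT h))

lemma isIso_of_bijective_precomp (hΩ : SpanningClass Ω) {X Y : C} (f : X ⟶ Y)
    (h : ∀ ⦃W⦄, shiftClosure (· ∈ Ω) ℤ W → Function.Bijective (fun φ : Y ⟶ W => f ≫ φ)) :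
    IsIso f := by
  obtain ⟨Z, g, k, hT⟩ := distinguished_cocone_triangle f
  exact (Triangle.isZero₃_iff_isIso₁ _ hT).1
    (hΩ.isZero_of_leftOrthogonal (leftOrthogonal_obj₃_of_bijective_precomp_mor₁ _ hT h))

end SpanningClass

/-- An exact functor between pretriangulated categories admitting both a left and a right
adjoint is fully faithful iff there is a spanning class `Ω` such that `F` induces bijections
on all `Hom(a₁, a₂⟦i⟧)` for `a₁, a₂ ∈ Ω`. -/
theorem bridgeland_fully_faithful_criterion
    {A : Type u₁} {B : Type u₂} [Category.{v₁} A] [Category.{v₂} B]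
    [HasShift A ℤ] [HasShift B ℤ] [Preadditive A] [Preadditive B]
    [HasZeroObject A] [HasZeroObject B]
    [∀ n : ℤ, (shiftFunctor A n).Additive] [∀ n : ℤ, (shiftFunctor B n).Additive]
    [Pretriangulated A] [Pretriangulated B]
    (F : A ⥤ B) [F.CommShift ℤ] [F.IsTriangulated]
    [F.IsLeftAdjoint] [F.IsRightAdjoint] :
    (F.Full ∧ F.Faithful) ↔
      ∃ Ω : Set A, SpanningClass Ω ∧
        ∀ a₁ ∈ Ω, ∀ a₂ ∈ Ω, ∀ i : ℤ,
          Function.Bijective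
            (fun f : a₁ ⟶ a₂⟦i⟧ => F.map f ≫ (F.commShiftIso i).hom.app a₂) := by
  have hcomm (a₁ a₂ : A) (i : ℤ) :
      Function.Bijective (fun f : a₁ ⟶ a₂⟦i⟧ => F.map f ≫ (F.commShiftIso i).hom.app a₂) ↔
        Function.Bijective (F.map : (a₁ ⟶ a₂⟦i⟧) → _) :=
    Function.Bijective.of_comp_iff' (((F.commShiftIso i).app a₂).homToEquiv).bijective _
  constructor
  · rintro ⟨_, _⟩
    exact ⟨Set.univ, SpanningClass.univ, fun a₁ _ a₂ _ i =>
      (hcomm a₁ a₂ i).2 ((Functor.FullyFaithful.ofFullyFaithful F).map_bijective _ _)⟩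
  rintro ⟨Ω, hΩ, hbij⟩
  have hS := F.map_bijective_of_mem_shiftClosure fun a₁ h₁ a₂ h₂ i =>
    (hcomm a₁ a₂ i).1 (hbij a₁ h₁ a₂ h₂ i)
  let adjR := Adjunction.ofIsLeftAdjoint F
  let adjL := Adjunction.ofIsRightAdjoint F
  have hS_target (X Y : A) (hY : ObjectProperty.shiftClosure (· ∈ Ω) ℤ Y) :
      Function.Bijective (F.map : (X ⟶ Y) → _) := by
    have : IsIso (adjR.unit.app Y) := hΩ.isIso_of_bijective_postcomp _ fun W hW =>
      (adjR.bijective_postcomp_unit_app_iff W Y).2 (hS hW hY)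
    exact (adjR.bijective_postcomp_unit_app_iff X Y).1
      ((isIso_iff_yoneda_map_bijective _).1 this X)
  have hmap (X Y : A) : Function.Bijective (F.map : (X ⟶ Y) → _) := by
    have : IsIso (adjL.counit.app X) := hΩ.isIso_of_bijective_precomp _ fun W hW =>
      (adjL.bijective_precomp_counit_app_iff X W).2 (hS_target X W hW)
    exact (adjL.bijective_precomp_counit_app_iff X Y).1
      ((isIso_iff_coyoneda_map_bijective _).1 this Y)
  exact ⟨⟨(hmap _ _).2⟩, ⟨fun h => (hmap _ _).1 h⟩⟩
end

section
/- Let k be a field and let F : 𝒜 → ℬ be a fully faithful exact functor (commuting with the shift and sending distinguished triangles to distinguished triangles) between k-linear pretriangulated categories with finite-dimensional Hom spaces, and suppose F admits a left adjoint. Let S_𝒜 and S_ℬ be Serre functors on 𝒜 and ℬ respectively. Assume that 𝒜 contains a nonzero object and that ℬ is indecomposable. Suppose there is a spanning class Ω for 𝒜 such that F(S_𝒜(ω)) ≅ S_ℬ(F(ω)) for every ω ∈ Ω. Then F is an equivalence of categories. -/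
open CategoryTheory Limits

universe v₁ v₂ u₁ u₂ u

/-- A Serre functor on a `k`-linear category with finite-dimensional Hom spaces:
an equivalence `functor : C ⥤ C` together with isomorphisms
`Hom(X, Y) ≅ (Hom(Y, S X))*`, natural in `X` and `Y`. -/
structure SerreFunctor (k : Type u) [Field k] (C : Type u₁) [Category.{v₁} C]
    [Preadditive C] [Linear k C] where
  functor : C ⥤ C
  isEquivalence : functor.IsEquivalence
  pairing : ∀ X Y : C, (X ⟶ Y) ≃ₗ[k] Module.Dual k (Y ⟶ functor.obj X)
  nat_right : ∀ {X Y Y' : C} (f : X ⟶ Y) (g : Y ⟶ Y') (h : Y' ⟶ functor.obj X),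
    pairing X Y' (f ≫ g) h = pairing X Y f (g ≫ h)
  nat_left : ∀ {X X' Y : C} (u : X' ⟶ X) (f : X ⟶ Y) (h : Y ⟶ functor.obj X'),
    pairing X' Y (u ≫ f) h = pairing X Y f (h ≫ functor.map u)

/-- A pretriangulated category is decomposable if it is the direct sum of two non-trivial
full subcategories closed under the shift which are mutually orthogonal. -/
def IsDecomposable (C : Type u₁) [Category.{v₁} C] [Preadditive C] [HasShift C ℤ] : Prop :=
  ∃ P₁ P₂ : Set C,
    (∃ b ∈ P₁, ¬ IsZero b) ∧ (∃ b ∈ P₂, ¬ IsZero b) ∧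
    (∀ b ∈ P₁, ∀ i : ℤ, b⟦i⟧ ∈ P₁) ∧ (∀ b ∈ P₂, ∀ i : ℤ, b⟦i⟧ ∈ P₂) ∧
    (∀ b : C, ∃ b₁ ∈ P₁, ∃ b₂ ∈ P₂,
      ∃ (i₁ : b₁ ⟶ b) (i₂ : b₂ ⟶ b) (p₁ : b ⟶ b₁) (p₂ : b ⟶ b₂),
        i₁ ≫ p₁ = 𝟙 b₁ ∧ i₂ ≫ p₂ = 𝟙 b₂ ∧ i₁ ≫ p₂ = 0 ∧ i₂ ≫ p₁ = 0 ∧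
        p₁ ≫ i₁ + p₂ ≫ i₂ = 𝟙 b) ∧
    (∀ b₁ ∈ P₁, ∀ b₂ ∈ P₂, (∀ f : b₁ ⟶ b₂, f = 0) ∧ (∀ g : b₂ ⟶ b₁, g = 0))

/-!
For the adjunction `L ⊣ F`, the unit `η_b : b ⟶ F (L b)` sits in a distinguished triangle
`b ⟶ F (L b) ⟶ Z ⟶ b⟦1⟧`. Since `η_b` is universal among maps into the image of `F`, the cone `Z`
admits no nonzero maps to the image of `F`. Serre duality, together with `F ∘ S_A ≅ S_B ∘ F` on the
spanning class, turns this into the vanishing of all maps from the image of `F` to `Z`. Hence the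
triangle splits, `b ≅ F (L b) ⊞ Z⟦-1⟧`, so the image of `F` and its two-sided orthogonal decompose
`B`; indecomposability forces every cone to vanish, i.e. every unit is an isomorphism.
-/

open Pretriangulated

lemma SerreFunctor.subsingleton_hom_iff {k : Type*} [Field k] {C : Type*} [Category C]
    [Preadditive C] [Linear k C] (S : SerreFunctor k C) (X Y : C) :
    Subsingleton (X ⟶ Y) ↔ Subsingleton (Y ⟶ S.functor.obj X) :=
  (S.pairing X Y).toEquiv.subsingleton_congr.trans (Module.subsingleton_dual_iff k)

namespace CategoryTheory

lemma subsingleton_shift_hom_iff {C : Type*} [Category C] [HasShift C ℤ] (X Y : C) (i : ℤ) :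
    Subsingleton (X⟦i⟧ ⟶ Y) ↔ Subsingleton (X ⟶ Y⟦-i⟧) :=
  ((shiftEquiv' C i (-i) (add_neg_cancel i)).toAdjunction.homEquiv X Y).subsingleton_congr

namespace ObjectProperty

variable {C : Type*} [Category C] [HasZeroMorphisms C] {P : ObjectProperty C} {X Y : C}

lemma leftOrthogonal.subsingleton_hom (hX : P.leftOrthogonal X) (hY : P Y) :
    Subsingleton (X ⟶ Y) :=
  ⟨fun f g => (hX f hY).trans (hX g hY).symm⟩

end ObjectProperty

section Pretriangulated

variable {C : Type*} [Category C] [Preadditive C] [HasZeroObject C] [HasShift C ℤ]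
  [∀ n : ℤ, (shiftFunctor C n).Additive] [Pretriangulated C]

lemma Pretriangulated.leftOrthogonal_obj₃_of_distTriang {P : ObjectProperty C}
    [P.IsStableUnderShift ℤ] (T : Triangle C) (hT : T ∈ distTriang C)
    (hP : ∀ W, P W → Function.Bijective fun f : T.obj₂ ⟶ W => T.mor₁ ≫ f) :
    P.leftOrthogonal T.obj₃ := by
  intro W φ hW
  have hφ : T.mor₂ ≫ φ = 0 := (hP W hW).1 (by
    dsimp only
    rw [comp_distTriang_mor_zero₁₂_assoc _ hT, zero_comp, comp_zero])
  obtain ⟨ρ, rfl⟩ := T.yoneda_exact₃ hT φ hφ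
  obtain ⟨τ, hτ⟩ := (shiftFunctor C (1 : ℤ)).map_surjective (ρ ≫ (shiftNegShift W (1 : ℤ)).inv)
  obtain ⟨σ, rfl⟩ := (hP _ (P.le_shift (-1) W hW)).2 τ
  have hρ : ρ = T.mor₁⟦(1 : ℤ)⟧' ≫ σ⟦(1 : ℤ)⟧' ≫ (shiftNegShift W (1 : ℤ)).hom := by
    rw [← Functor.map_comp_assoc, hτ, Category.assoc, Iso.inv_hom_id, Category.comp_id]
  rw [hρ, comp_distTriang_mor_zero₃₁_assoc _ hT, zero_comp]

lemma Pretriangulated.nonempty_iso_biprod_of_distTriang_of_mor₂_eq_zero (T : Triangle C)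
    (hT : T ∈ distTriang C) (h : T.mor₂ = 0) : Nonempty (T.obj₁ ≅ T.obj₃⟦(-1 : ℤ)⟧ ⊞ T.obj₂) := by
  obtain ⟨e, -⟩ := exists_iso_binaryBiproduct_of_distTriang T.invRotate
    (inv_rot_of_distTriang T hT) (by rw [Triangle.invRotate_mor₃, h, zero_comp]; rfl)
  exact ⟨e⟩

end Pretriangulated

lemma isDecomposable_of_forall_nonempty_iso_biprod {C : Type*} [Category C]
    [Preadditive C] [HasShift C ℤ] [HasBinaryBiproducts C]
    (P : ObjectProperty C) [P.IsStableUnderShift ℤ]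
    (h₁ : ∃ X, P X ∧ ¬ IsZero X)
    (h₂ : ∃ X, (P.leftOrthogonal ⊓ P.rightOrthogonal) X ∧ ¬ IsZero X)
    (hsplit : ∀ X, ∃ X₁ X₂, P X₁ ∧ (P.leftOrthogonal ⊓ P.rightOrthogonal) X₂ ∧
      Nonempty (X ≅ X₁ ⊞ X₂)) :
    IsDecomposable C := by
  refine ⟨P, P.leftOrthogonal ⊓ P.rightOrthogonal, h₁, h₂, fun X hX i => P.le_shift i X hX,
    fun X hX i => (P.leftOrthogonal ⊓ P.rightOrthogonal).le_shift i X hX, fun X => ?_,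
    fun X₁ h₁ X₂ h₂ => ⟨fun f => h₂.2 f h₁, fun g => h₂.1 g h₁⟩⟩
  obtain ⟨X₁, X₂, h₁, h₂, ⟨e⟩⟩ := hsplit X
  refine ⟨X₁, h₁, X₂, h₂, biprod.inl ≫ e.inv, biprod.inr ≫ e.inv, e.hom ≫ biprod.fst,
    e.hom ≫ biprod.snd, by simp, by simp, by simp, by simp, ?_⟩
  calc _ = e.hom ≫ (biprod.fst ≫ biprod.inl + biprod.snd ≫ biprod.inr) ≫ e.inv := by
        simp only [Preadditive.add_comp, Preadditive.comp_add, Category.assoc]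
    _ = 𝟙 X := by simp

section Reflective

variable {A B : Type*} [Category A] [Category B]

lemma Functor.bijective_unit_comp (F : A ⥤ B) [Reflective F] (b : B) {W : B}
    (hW : F.essImage W) :
    Function.Bijective fun f : F.obj ((reflector F).obj b) ⟶ W =>
      (reflectorAdjunction F).unit.app b ≫ f := by
  simpa only [← unitCompPartialBijective_symm_apply b hW] using
    (unitCompPartialBijective b hW).symm.bijective

end Reflective

section Serre

variable {k : Type*} [Field k] {A B : Type*} [Category A] [Category B]
  [Preadditive A] [Preadditive B] [HasShift A ℤ] [HasShift B ℤ] [Linear k B]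

/-- Writing `d ≅ S X`, Serre duality and the adjunction identify `G X ⟶ ω⟦i⟧` with the dual of
`F ω ⟶ d⟦-i⟧`, so `G X = 0`; the same identifications then show `F a ⟶ d` vanishes for every `a`. -/
lemma rightOrthogonal_essImage_of_spanningClass (F : A ⥤ B) [F.CommShift ℤ]
    {G : B ⥤ A} (adj : G ⊣ F) (S : SerreFunctor k B) {Ω : Set A} (hΩ : SpanningClass Ω) {d : B}
    (hd : ∀ ω ∈ Ω, ∀ i : ℤ, Subsingleton (F.obj ω ⟶ d⟦i⟧)) :
    F.essImage.rightOrthogonal d := by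
  have := S.isEquivalence
  let X := S.functor.objPreimage d
  let e : S.functor.obj X ≅ d := S.functor.objObjPreimageIso d
  have hGX : IsZero (G.obj X) := (hΩ _).1 fun ω hω i f =>
    have : Subsingleton (G.obj X ⟶ ω⟦i⟧) :=
      (adj.homEquiv _ _).subsingleton_congr.mpr <|
        (Iso.homCongr (Iso.refl X) ((F.commShiftIso i).app ω)).subsingleton_congr.mpr <|
        (S.subsingleton_hom_iff _ _).mpr <| (subsingleton_shift_hom_iff _ _ i).mpr <|
        (Iso.homCongr (Iso.refl _) ((shiftFunctor B (-i)).mapIso e)).subsingleton_congr.mpr <|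
        hd ω hω (-i)
    Subsingleton.elim f 0
  rintro W f ⟨a, ⟨e'⟩⟩
  have : Subsingleton (W ⟶ d) :=
    (Iso.homCongr e' e).subsingleton_congr.mp <| (S.subsingleton_hom_iff _ _).mp <|
      (adj.homEquiv _ _).subsingleton_congr.mp ⟨hGX.eq_of_src⟩
  exact Subsingleton.elim f 0

end Serre

section Triangulated

variable {A B : Type*} [Category A] [Category B]
  [Preadditive A] [Preadditive B] [HasShift A ℤ] [HasShift B ℤ]
  [HasZeroObject A] [HasZeroObject B]
  [∀ n : ℤ, (shiftFunctor A n).Additive] [∀ n : ℤ, (shiftFunctor B n).Additive]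
  [Pretriangulated A] [Pretriangulated B] (F : A ⥤ B) [F.CommShift ℤ] [F.IsTriangulated]

lemma leftOrthogonal_essImage_of_distTriang_unit [Reflective F] {b Z : B}
    {g : F.obj ((reflector F).obj b) ⟶ Z} {δ : Z ⟶ b⟦(1 : ℤ)⟧}
    (hT : Triangle.mk ((reflectorAdjunction F).unit.app b) g δ ∈ distTriang B) :
    F.essImage.leftOrthogonal Z :=
  leftOrthogonal_obj₃_of_distTriang _ hT fun _ hW => F.bijective_unit_comp b hW

lemma leftOrthogonal_essImage_le_rightOrthogonal {k : Type*} [Field k] [Linear k A] [Linear k B]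
    [F.Full] {G : B ⥤ A} (adj : G ⊣ F) (SA : SerreFunctor k A) (SB : SerreFunctor k B)
    {Ω : Set A} (hΩ : SpanningClass Ω)
    (hcomm : ∀ ω ∈ Ω, Nonempty (F.obj (SA.functor.obj ω) ≅ SB.functor.obj (F.obj ω))) :
    F.essImage.leftOrthogonal ≤ F.essImage.rightOrthogonal := fun Z hZ =>
  rightOrthogonal_essImage_of_spanningClass F adj SB hΩ fun ω hω i =>
    have ⟨e⟩ := hcomm ω hω
    (SB.subsingleton_hom_iff _ _).mpr <|
      (Iso.homCongr (Iso.refl _) e).subsingleton_congr.mp <|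
      (F.essImage.leftOrthogonal.le_shift i Z hZ).subsingleton_hom (F.obj_mem_essImage _)

end Triangulated

end CategoryTheory

open CategoryTheory

/-- A fully faithful exact functor between pretriangulated categories with Serre functors,
possessing a left adjoint, whose source is non-trivial and whose target is indecomposable,
and which intertwines the Serre functors on a spanning class, is an equivalence. -/
theorem bridgeland_equivalence_criterion {k : Type u} [Field k]
    {A : Type u₁} {B : Type u₂} [Category.{v₁} A] [Category.{v₂} B]
    [Preadditive A] [Preadditive B] [Linear k A] [Linear k B]
    [HasShift A ℤ] [HasShift B ℤ] [HasZeroObject A] [HasZeroObject B]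
    [∀ n : ℤ, (shiftFunctor A n).Additive] [∀ n : ℤ, (shiftFunctor B n).Additive]
    [Pretriangulated A] [Pretriangulated B]
    [∀ X Y : A, FiniteDimensional k (X ⟶ Y)] [∀ X Y : B, FiniteDimensional k (X ⟶ Y)]
    (F : A ⥤ B) [F.CommShift ℤ] [F.IsTriangulated] [F.Full] [F.Faithful]
    [F.IsRightAdjoint]
    (SA : SerreFunctor k A) (SB : SerreFunctor k B)
    (hA : ∃ a : A, ¬ IsZero a)
    (hB₁ : ∃ b : B, ¬ IsZero b) (hB₂ : ¬ IsDecomposable B)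
    (Ω : Set A) (hΩ : SpanningClass Ω)
    (hcomm : ∀ ω ∈ Ω, Nonempty (F.obj (SA.functor.obj ω) ≅ SB.functor.obj (F.obj ω))) :
    F.IsEquivalence := by
  have : Reflective F := { L := F.leftAdjoint, adj := Adjunction.ofIsRightAdjoint F }
  let η := (reflectorAdjunction F).unit
  let orth := F.essImage.leftOrthogonal ⊓ F.essImage.rightOrthogonal
  choose Z g δ hT using fun b => distinguished_cocone_triangle (η.app b)
  have hZ (b : B) : orth (Z b) :=
    have hl := leftOrthogonal_essImage_of_distTriang_unit F (hT b)
    ⟨hl, leftOrthogonal_essImage_le_rightOrthogonal F (reflectorAdjunction F) SA SB hΩ hcomm _ hl⟩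
  by_cases hZ₀ : ∀ b, IsZero (Z b)
  · have : F.EssSurj := ⟨fun b =>
      have : IsIso (η.app b) := (Triangle.isZero₃_iff_isIso₁ _ (hT b)).mp (hZ₀ b)
      (reflectorAdjunction F).mem_essImage_of_unit_isIso b⟩
    exact { }
  obtain ⟨b₀, hb₀⟩ := not_forall.mp hZ₀
  obtain ⟨a, ha⟩ := hA
  refine absurd (isDecomposable_of_forall_nonempty_iso_biprod F.essImage
    ⟨F.obj a, F.obj_mem_essImage a, fun h => ha (IsZero.of_full_of_faithful_of_isZero F a h)⟩
    ⟨Z b₀, hZ b₀, hb₀⟩ fun b => ?_) hB₂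
  obtain ⟨e⟩ := nonempty_iso_biprod_of_distTriang_of_mor₂_eq_zero _ (hT b)
    ((hZ b).2 (g b) (F.obj_mem_essImage _))
  exact ⟨_, _, F.obj_mem_essImage _, orth.le_shift (-1) _ (hZ b), ⟨e ≪≫ biprod.braiding _ _⟩⟩
end

section
/- Let (R, 𝔪) be a commutative Noetherian local ring with residue field k = R/𝔪, let m be an integer, and let P be a bounded-above cochain complex of finitely generated free R-modules such that H^i(P ⊗_R k) = 0 for all i > m. Then H^i(P) = 0 for all i > m. -/
/-!
Descending induction from the degree above which `P` vanishes, carrying the invariant that `P` is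
exact at `i` and the cycles `Zⁱ` are a direct summand of `Pⁱ`. If this holds at `i + 1`, then
`Bⁱ⁺¹ = Zⁱ⁺¹` is a summand of a free module, hence projective, so `dⁱ : Pⁱ → Bⁱ⁺¹` splits and
`Zⁱ` is a summand of `Pⁱ`. Exactness of `P ⊗ k` at `i` says `Zⁱ ⊆ Bⁱ + 𝔪Pⁱ`; projecting onto the
summand `Zⁱ` gives `Zⁱ ⊆ Bⁱ + 𝔪Zⁱ`, and Nakayama (`Zⁱ` is finitely generated, being a summand
of `Pⁱ`) gives `Zⁱ = Bⁱ`.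
-/

open CategoryTheory Limits MonoidalCategory

universe u

namespace TensorProduct

variable {R M : Type*} [CommRing R] [AddCommGroup M] [Module R M] (I : Ideal R)

theorem tmul_one_eq_zero_iff (x : M) :
    x ⊗ₜ[R] (1 : R ⧸ I) = 0 ↔ x ∈ I • (⊤ : Submodule R M) := by
  rw [← tensorQuotEquivQuotSMul_symm_mk, LinearEquiv.map_eq_zero_iff,
    Submodule.Quotient.mk_eq_zero]

theorem exists_tmul_one_eq (t : M ⊗[R] (R ⧸ I)) : ∃ x : M, x ⊗ₜ[R] (1 : R ⧸ I) = t := by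
  obtain ⟨x, rfl⟩ := (tensorQuotEquivQuotSMul M I).symm.surjective.comp
    (Submodule.mkQ_surjective _) t
  exact ⟨x, (tensorQuotEquivQuotSMul_symm_mk I x).symm⟩

end TensorProduct

namespace LinearMap

open Submodule TensorProduct

variable {R A B C : Type*} [CommRing R] [AddCommGroup A] [Module R A] [AddCommGroup B] [Module R B]
  [AddCommGroup C] [Module R C]

theorem ker_le_range_sup_smul_top_of_rTensor (I : Ideal R) {f : A →ₗ[R] B} {g : B →ₗ[R] C}
    (h : ker (g.rTensor (R ⧸ I)) ≤ range (f.rTensor (R ⧸ I))) :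
    ker g ≤ range f ⊔ I • ⊤ := by
  intro x hx
  obtain ⟨η, hη⟩ := h (show x ⊗ₜ[R] (1 : R ⧸ I) ∈ ker (g.rTensor (R ⧸ I)) by
    simp [mem_ker.1 hx])
  obtain ⟨y, rfl⟩ := exists_tmul_one_eq I η
  have hxy : x - f y ∈ I • (⊤ : Submodule R B) := by
    rw [← tmul_one_eq_zero_iff, sub_tmul, ← hη, rTensor_tmul, sub_self]
  exact mem_sup.2 ⟨f y, mem_range_self f y, x - f y, hxy, add_sub_cancel _ _⟩

theorem exists_isProj_ker_of_projective_range (f : A →ₗ[R] B) [Module.Projective R (range f)] :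
    ∃ r : A →ₗ[R] A, IsProj (ker f) r := by
  obtain ⟨s, hs⟩ := f.rangeRestrict.exists_rightInverse_of_surjective f.range_rangeRestrict
  have hfs (y : range f) : f (s y) = y := congrArg Subtype.val (LinearMap.congr_fun hs y)
  refine ⟨id - s ∘ₗ f.rangeRestrict, fun x => ?_, fun x hx => ?_⟩
  · simp [hfs]
  · simp [show f.rangeRestrict x = 0 from Subtype.ext (mem_ker.1 hx)]

end LinearMap

theorem LinearMap.IsProj.projective {R M : Type*} [CommRing R] [AddCommGroup M] [Module R M]
    [Module.Projective R M] {p : Submodule R M} {r : M →ₗ[R] M} (hr : LinearMap.IsProj p r) :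
    Module.Projective R p :=
  .of_split p.subtype hr.codRestrict (by ext; simp)

theorem Submodule.le_of_isProj_of_le_sup_smul_top {R M : Type*} [CommRing R] [AddCommGroup M]
    [Module R M] [Module.Finite R M] {I : Ideal R} (hI : I ≤ Ideal.jacobson ⊥)
    {K N : Submodule R M} {r : M →ₗ[R] M} (hr : LinearMap.IsProj K r) (hNK : N ≤ K)
    (hK : K ≤ N ⊔ I • ⊤) : K ≤ N := by
  have map_eq {L : Submodule R M} (hL : L ≤ K) : L.map r = L := by
    ext x
    refine ⟨?_, fun hx => ⟨x, hx, hr.map_id x (hL hx)⟩⟩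
    rintro ⟨y, hy, rfl⟩
    rwa [hr.map_id y (hL hy)]
  have hrtop : (⊤ : Submodule R M).map r = K := by rw [← LinearMap.range_eq_map, hr.range]
  refine le_of_le_smul_of_le_jacobson_bot (hrtop ▸ Module.Finite.fg_top.map r) hI ?_
  calc K = K.map r := (map_eq le_rfl).symm
    _ ≤ (N ⊔ I • ⊤).map r := map_mono hK
    _ = N ⊔ I • K := by rw [map_sup, map_smul'', map_eq hNK, hrtop]

namespace CochainComplex

variable {R : Type u} [CommRing R] (P : CochainComplex (ModuleCat.{u} R) ℤ)

theorem moduleCat_exactAt_iff {i j k : ℤ} (hij : i + 1 = j) (hjk : j + 1 = k) :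
    P.ExactAt j ↔ LinearMap.ker (P.d j k).hom ≤ LinearMap.range (P.d i j).hom := by
  rw [HomologicalComplex.exactAt_iff' _ i j k ((ComplexShape.up ℤ).prev_eq' hij)
    ((ComplexShape.up ℤ).next_eq' hjk), ShortComplex.moduleCat_exact_iff_ker_sub_range]
  rfl

theorem range_d_le_ker_d (i j k : ℤ) :
    LinearMap.range (P.d i j).hom ≤ LinearMap.ker (P.d j k).hom :=
  LinearMap.range_le_ker_iff.2 (congrArg ModuleCat.Hom.hom (P.d_comp_d i j k))

def SplitExactAt (i : ℤ) : Prop :=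
  P.ExactAt i ∧ ∃ r : P.X i →ₗ[R] P.X i, LinearMap.IsProj (LinearMap.ker (P.d i (i + 1)).hom) r

theorem splitExactAt_of_isZero {i : ℤ} (h : IsZero (P.X i)) : P.SplitExactAt i := by
  have : Subsingleton (P.X i) := ModuleCat.isZero_iff_subsingleton.1 h
  refine ⟨(P.moduleCat_exactAt_iff (sub_add_cancel i 1) rfl).2 fun x _ => ?_,
    LinearMap.id, fun x => ?_, fun x _ => rfl⟩
  all_goals rw [Subsingleton.elim x 0]; exact zero_mem _

theorem splitExactAt_of_succ [IsLocalRing R] {i : ℤ} [Module.Projective R (P.X (i + 1))]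
    [Module.Finite R (P.X i)]
    (hk : (((tensorRight (ModuleCat.of R (IsLocalRing.ResidueField R))).mapHomologicalComplex
      (ComplexShape.up ℤ)).obj P).ExactAt i)
    (h : P.SplitExactAt (i + 1)) : P.SplitExactAt i := by
  obtain ⟨hexact, r, hr⟩ := h
  have hrange :
      LinearMap.range (P.d i (i + 1)).hom = LinearMap.ker (P.d (i + 1) (i + 1 + 1)).hom :=
    (P.range_d_le_ker_d _ _ _).antisymm ((P.moduleCat_exactAt_iff rfl rfl).1 hexact)
  have : Module.Projective R (LinearMap.range (P.d i (i + 1)).hom) := hrange ▸ hr.projective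
  obtain ⟨r', hr'⟩ := LinearMap.exists_isProj_ker_of_projective_range (P.d i (i + 1)).hom
  refine ⟨(P.moduleCat_exactAt_iff (sub_add_cancel i 1) rfl).2 ?_, r', hr'⟩
  exact Submodule.le_of_isProj_of_le_sup_smul_top
    (IsLocalRing.maximalIdeal_le_jacobson ⊥) hr' (P.range_d_le_ker_d _ _ _)
    (LinearMap.ker_le_range_sup_smul_top_of_rTensor _
      ((moduleCat_exactAt_iff _ (sub_add_cancel i 1) rfl).1 hk))

end CochainComplex

theorem cohomology_vanishing_of_fiber_vanishing_general
    {R : Type u} [CommRing R] [IsLocalRing R]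
    (m : ℤ) (P : CochainComplex (ModuleCat.{u} R) ℤ)
    (hfree : ∀ i : ℤ, Module.Free R (P.X i))
    (hfg : ∀ i : ℤ, Module.Finite R (P.X i))
    (hbdd : ∃ N : ℤ, ∀ i ≥ N, IsZero (P.X i))
    (hvan : ∀ i > m, IsZero
      ((((tensorRight (ModuleCat.of R (IsLocalRing.ResidueField R))).mapHomologicalComplex
        (ComplexShape.up ℤ)).obj P).homology i)) :
    ∀ i > m, IsZero (P.homology i) := by
  obtain ⟨N, hN⟩ := hbdd
  have split_of_ge (i : ℤ) (hi : N ≤ i) := P.splitExactAt_of_isZero (hN i hi)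
  have split_of_le : ∀ i ≤ N, m < i → P.SplitExactAt i := by
    refine Int.leInductionDown (fun _ => split_of_ge N le_rfl) fun i _ ih hi => ?_
    have h := ih (by omega)
    rw [← sub_add_cancel i 1] at h
    exact P.splitExactAt_of_succ ((HomologicalComplex.exactAt_iff_isZero_homology _ _).2
      (hvan _ hi)) h
  intro i hi
  rw [← P.exactAt_iff_isZero_homology]
  rcases le_or_gt N i with h | h
  exacts [(split_of_ge i h).1, (split_of_le i h.le hi).1]

/-- Nakayama-type vanishing: if `P` is a bounded-above cochain complex of finitely
generated free modules over a commutative Noetherian local ring `R` with residue field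
`k`, and `H^i(P ⊗_R k) = 0` for all `i > m`, then `H^i(P) = 0` for all `i > m`. -/
theorem cohomology_vanishing_of_fiber_vanishing
    {R : Type u} [CommRing R] [IsNoetherianRing R] [IsLocalRing R]
    (m : ℤ) (P : CochainComplex (ModuleCat.{u} R) ℤ)
    (hfree : ∀ i : ℤ, Module.Free R (P.X i))
    (hfg : ∀ i : ℤ, Module.Finite R (P.X i))
    (hbdd : ∃ N : ℤ, ∀ i ≥ N, IsZero (P.X i))
    (hvan : ∀ i > m, IsZero
      ((((tensorRight (ModuleCat.of R (IsLocalRing.ResidueField R))).mapHomologicalComplex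
        (ComplexShape.up ℤ)).obj P).homology i)) :
    ∀ i > m, IsZero (P.homology i) :=
  cohomology_vanishing_of_fiber_vanishing_general m P hfree hfg hbdd hvan
end
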